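/- arXiv:1208.2125 — 7 statements merged into one kernel-verified Lean document; each statement's English description precedes it below -/
import Mathlib

section
/- For every L ⊆ ℝ, the prime closure of L equals the set of suprema ⊔C of coherent subsets C of 𝒫(L), where 𝒫(L) is the set of prime prefixes of elements of L. Moreover, for L, K ⊆ ℝ, the prime closures of L and K coincide if and only if 𝒫(L) = 𝒫(K). -/
/-!
Abstract setting for real Mazurkiewicz traces: `T` is the set ℝ of real
traces with the prefix partial order, `P : Set T` is the set 𝒫 of prime
traces, `cone p` is `pℝ = {t : p ≤ t}`.
-/

namespace MzTrace

variable {T : Type} [PartialOrder T]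

/-- `cone p` models `pℝ`, the set of traces having `p` as a prefix. -/
def cone (p : T) : Set T := Set.Ici p

/-- A set of traces is prime-open (w.r.t. the set `P` of prime traces)
if it is a union `⋃ {pℝ : p ∈ U}` for some `U ⊆ P`. -/
def PrimeOpen (P : Set T) (L : Set T) : Prop := ∃ U ⊆ P, L = ⋃ p ∈ U, cone p

/-- A set is prime-closed if its complement is prime-open. -/
def PrimeClosed (P : Set T) (L : Set T) : Prop := PrimeOpen P Lᶜ

/-- The prime closure of `L`: the intersection of all prime-closed supersets. -/
def primeClosure (P : Set T) (L : Set T) : Set T := ⋂₀ {K | PrimeClosed P K ∧ L ⊆ K}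

/-- A set `C` of traces is coherent if it has a common upper bound (a trace
`t` with `C ⊆ pref(t)`). -/
def Coherent (C : Set T) : Prop := BddAbove C

/-- `primePref P L` is `𝒫(L)`, the set of prime prefixes of elements of `L`. -/
def primePref (P : Set T) (L : Set T) : Set T := {p ∈ P | ∃ t ∈ L, p ≤ t}

/-- `L` is locally monitorable: for every prime `s` there is a prime `t`
with `{s,t}` coherent (i.e. `s ≤ tℝ`) and `tℝ ⊆ L` or `tℝ ⊆ Lᶜ`. -/
def LocallyMonitorable (P : Set T) (L : Set T) : Prop :=
  ∀ s ∈ P, ∃ t ∈ P, Coherent {s, t} ∧ (cone t ⊆ L ∨ cone t ⊆ Lᶜ)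

end MzTrace

/-!
A trace `x` lies in the prime closure of `L` exactly when all its prime prefixes are prime
prefixes of `L`: the set of such `x` is prime-closed, its complement being the union of the cones
`pℝ` over the primes `p ∉ 𝒫(L)`, and every prime-closed superset of `L` contains it. Since every
trace is the supremum of its prime prefixes, and a prime below a supremum of primes lies below
one of them, these traces are exactly the suprema of subsets of `𝒫(L)`. In particular the prime
closure determines `𝒫(L)` and is determined by it.
-/

namespace MzTrace

variable {T : Type} [PartialOrder T]

section

variable {P L K : Set T}

@[simp]
theorem mem_primePref_singleton {p x : T} : p ∈ primePref P {x} ↔ p ∈ P ∧ p ≤ x := by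
  simp [primePref]

theorem primePref_mono (h : L ⊆ K) : primePref P L ⊆ primePref P K :=
  fun _ ⟨hp, t, ht, hpt⟩ => ⟨hp, t, h ht, hpt⟩

theorem primePref_singleton_subset {x : T} (hx : x ∈ L) : primePref P {x} ⊆ primePref P L :=
  primePref_mono (Set.singleton_subset_iff.mpr hx)

theorem primeClosed_setOf_primePref_subset (U : Set T) :
    PrimeClosed P {x | primePref P {x} ⊆ U} := by
  refine ⟨P \ U, Set.sdiff_subset, ?_⟩
  ext x
  simp [Set.subset_def, cone, and_comm]

theorem setOf_primePref_subset_subset_of_primeClosed (hK : PrimeClosed P K) (hLK : L ⊆ K) :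
    {x | primePref P {x} ⊆ primePref P L} ⊆ K := by
  obtain ⟨U, hUP, hU⟩ := hK
  intro x hx
  by_contra hxK
  have hxU : x ∈ ⋃ p ∈ U, cone p := hU ▸ hxK
  simp only [Set.mem_iUnion, cone, Set.mem_Ici] at hxU
  obtain ⟨p, hpU, hpx⟩ := hxU
  obtain ⟨-, t, htL, hpt⟩ := hx (mem_primePref_singleton.mpr ⟨hUP hpU, hpx⟩)
  have htK : t ∈ Kᶜ := hU ▸ Set.mem_biUnion hpU hpt
  exact htK (hLK htL)

theorem primeClosure_eq_setOf_primePref_subset :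
    primeClosure P L = {x | primePref P {x} ⊆ primePref P L} :=
  (Set.sInter_subset_of_mem (Set.mem_ofPred.mpr ⟨primeClosed_setOf_primePref_subset _,
      fun _ => primePref_singleton_subset⟩)).antisymm
    fun _ hx _ ⟨hK, hLK⟩ => setOf_primePref_subset_subset_of_primeClosed hK hLK hx

theorem primePref_primeClosure : primePref P (primeClosure P L) = primePref P L := by
  refine (primePref_mono fun t ht _ hK => hK.2 ht).antisymm' ?_
  rintro p ⟨hp, x, hx, hpx⟩
  rw [primeClosure_eq_setOf_primePref_subset] at hx
  exact hx (mem_primePref_singleton.mpr ⟨hp, hpx⟩)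

theorem primeClosure_eq_iff_primePref_eq :
    primeClosure P L = primeClosure P K ↔ primePref P L = primePref P K := by
  refine ⟨fun h => ?_, fun h => ?_⟩
  · rw [← primePref_primeClosure (L := L), h, primePref_primeClosure]
  · rw [primeClosure_eq_setOf_primePref_subset, primeClosure_eq_setOf_primePref_subset, h]

theorem setOf_isLUB_eq_setOf_primePref_subset
    (hprime : ∀ p ∈ P, ∀ C : Set T, ∀ x : T, C ⊆ P → IsLUB C x → p ≤ x → ∃ c ∈ C, p ≤ c)
    (hlub : ∀ x : T, IsLUB (primePref P {x}) x) :
    {x | ∃ C ⊆ primePref P L, IsLUB C x} = {x | primePref P {x} ⊆ primePref P L} := by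
  ext x
  refine ⟨fun ⟨C, hCL, hC⟩ p hpx => ?_, fun hx => ⟨_, hx, hlub x⟩⟩
  obtain ⟨hp, hpx⟩ := mem_primePref_singleton.mp hpx
  obtain ⟨c, hcC, hpc⟩ := hprime p hp C x (fun c hc => (hCL hc).1) hC hpx
  obtain ⟨-, t, htL, hct⟩ := hCL hcC
  exact ⟨hp, t, htL, hpc.trans hct⟩

end

theorem primeClosure_eq_sups_of_coherent_general (P : Set T)
    (hprime : ∀ p ∈ P, ∀ C : Set T, ∀ x : T, C ⊆ P → IsLUB C x → p ≤ x → ∃ c ∈ C, p ≤ c)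
    (hlub : ∀ x : T, IsLUB (primePref P {x}) x) :
    (∀ L : Set T, primeClosure P L = {x | ∃ C ⊆ primePref P L, IsLUB C x}) ∧
    (∀ L K : Set T, primeClosure P L = primeClosure P K ↔ primePref P L = primePref P K) :=
  ⟨fun _ => primeClosure_eq_setOf_primePref_subset.trans
      (setOf_isLUB_eq_setOf_primePref_subset hprime hlub).symm,
    fun _ _ => primeClosure_eq_iff_primePref_eq⟩

/-- Lemma lem:a: under the basic domain properties of real
traces (coherent sets of primes have suprema, every prime below a supremum is
below some member, and every trace is the supremum of its prime prefixes),
the prime closure of `L` is the set of suprema `⊔C` of coherent subsets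
`C ⊆ 𝒫(L)`; moreover `L̄ = K̄` iff `𝒫(L) = 𝒫(K)`. -/
theorem primeClosure_eq_sups_of_coherent (P : Set T)
    (hsup : ∀ C ⊆ P, Coherent C → ∃ x, IsLUB C x)
    (hprime : ∀ p ∈ P, ∀ C : Set T, ∀ x : T, C ⊆ P → IsLUB C x → p ≤ x → ∃ c ∈ C, p ≤ c)
    (hlub : ∀ x : T, IsLUB (primePref P {x}) x) :
    (∀ L : Set T, primeClosure P L = {x | ∃ C ⊆ primePref P L, IsLUB C x}) ∧
    (∀ L K : Set T, primeClosure P L = primeClosure P K ↔ primePref P L = primePref P K) :=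
  primeClosure_eq_sups_of_coherent_general P hprime hlub

end MzTrace
end

section
/- Every prime-closed trace language is locally monitorable. -/
namespace MzTrace

variable {T : Type} [PartialOrder T]

theorem coherent_pair_of_le {s t r : T} (hs : s ≤ r) (ht : t ≤ r) : Coherent {s, t} :=
  ⟨r, by simp [upperBounds, hs, ht]⟩

theorem PrimeOpen.exists_cone_subset {P L : Set T} (hL : PrimeOpen P L) {r : T} (hr : r ∈ L) :
    ∃ p ∈ P, p ≤ r ∧ cone p ⊆ L := by
  obtain ⟨U, hUP, rfl⟩ := hL
  obtain ⟨p, hpU, hpr⟩ := Set.mem_iUnion₂.mp hr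
  exact ⟨p, hUP hpU, hpr, Set.subset_biUnion_of_mem hpU⟩

/-- Lemma lem:b: every prime-closed trace language is locally
monitorable. -/
theorem primeClosed_locallyMonitorable (P : Set T) (L : Set T)
    (h : PrimeClosed P L) : LocallyMonitorable P L := by
  intro s hs
  by_cases hsL : cone s ⊆ L
  · exact ⟨s, hs, coherent_pair_of_le le_rfl le_rfl, Or.inl hsL⟩
  obtain ⟨r, hsr, hrL⟩ := Set.not_subset.mp hsL
  obtain ⟨p, hp, hpr, hpL⟩ := PrimeOpen.exists_cone_subset h hrL
  exact ⟨p, hp, coherent_pair_of_le hsr hpr, Or.inr hpL⟩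

end MzTrace
end

section
/- A set L ⊆ ℝ is locally monitorable if and only if the intersection of the prime closures L̄ ∩ (L^c)̄ contains no non-empty prime-open subset. -/
/-!
A trace lies in the prime closure of `L` exactly when none of its prime prefixes has its cone
inside `Lᶜ`. Hence a prime cone `sℝ` lies in `L̄ ∩ (Lᶜ)̄` iff no prime `t` coherent with `s` has
`tℝ ⊆ L` or `tℝ ⊆ Lᶜ`; and since every nonempty prime-open set contains a prime cone, both sides
of the equivalence say that no prime cone lies in `L̄ ∩ (Lᶜ)̄`.
-/

namespace MzTrace

variable {T : Type} [PartialOrder T] {P L O B : Set T} {s t x : T}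

lemma coherent_pair_iff : Coherent {s, t} ↔ ∃ u, s ≤ u ∧ t ≤ u := by
  simp [Coherent, BddAbove, upperBounds, Set.Nonempty]

lemma primeOpen_cone (hs : s ∈ P) : PrimeOpen P (cone s) :=
  ⟨{s}, Set.singleton_subset_iff.2 hs, by simp⟩

lemma PrimeOpen.exists_cone_subset_s7 (hO : PrimeOpen P O) (hx : x ∈ O) :
    ∃ s ∈ P, s ≤ x ∧ cone s ⊆ O := by
  obtain ⟨U, hUP, rfl⟩ := hO
  obtain ⟨s, hsU, hsx⟩ := Set.mem_iUnion₂.1 hx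
  exact ⟨s, hUP hsU, hsx, Set.subset_biUnion_of_mem hsU⟩

lemma mem_primeClosure_iff : x ∈ primeClosure P L ↔ ∀ s ∈ P, s ≤ x → ¬cone s ⊆ Lᶜ := by
  constructor
  · intro hx s hs hsx hsL
    have hclosed : PrimeClosed P (cone s)ᶜ := by
      rw [PrimeClosed, compl_compl]
      exact primeOpen_cone hs
    exact hx _ ⟨hclosed, fun y hy hys => hsL hys hy⟩ hsx
  · intro h
    by_contra hx
    simp only [primeClosure, Set.mem_sInter, not_forall] at hx
    obtain ⟨K, ⟨hK, hLK⟩, hxK⟩ := hx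
    obtain ⟨s, hs, hsx, hsK⟩ := hK.exists_cone_subset_s7 hxK
    exact h s hs hsx (hsK.trans (Set.compl_subset_compl.2 hLK))

lemma mem_primeClosure_inter_compl_iff :
    x ∈ primeClosure P L ∩ primeClosure P Lᶜ ↔
      ∀ s ∈ P, s ≤ x → ¬(cone s ⊆ L ∨ cone s ⊆ Lᶜ) := by
  simp only [Set.mem_inter_iff, mem_primeClosure_iff, compl_compl, not_or]
  grind

lemma cone_subset_primeClosure_inter_compl_iff :
    cone s ⊆ primeClosure P L ∩ primeClosure P Lᶜ ↔
      ∀ t ∈ P, Coherent {s, t} → ¬(cone t ⊆ L ∨ cone t ⊆ Lᶜ) := by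
  simp only [coherent_pair_iff]
  constructor
  · rintro h t ht ⟨u, hsu, htu⟩
    exact mem_primeClosure_inter_compl_iff.1 (h hsu) t ht htu
  · intro h x hsx
    exact mem_primeClosure_inter_compl_iff.2 fun t ht htx => h t ht ⟨x, hsx, htx⟩

lemma forall_primeOpen_subset_eq_empty_iff :
    (∀ O, PrimeOpen P O → O ⊆ B → O = ∅) ↔ ∀ s ∈ P, ¬cone s ⊆ B := by
  constructor
  · intro h s hs hsB
    have hs_mem : s ∈ cone s := le_refl s
    simp [h _ (primeOpen_cone hs) hsB] at hs_mem
  · intro h O hO hOB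
    refine Set.eq_empty_iff_forall_notMem.2 fun x hx => ?_
    obtain ⟨s, hs, -, hsO⟩ := hO.exists_cone_subset_s7 hx
    exact h s hs (hsO.trans hOB)

/-- Proposition prop:c: `L` is locally monitorable iff
`L̄ ∩ (L^c)̄` contains no non-empty prime-open subset. -/
theorem locallyMonitorable_iff_no_nonempty_primeOpen (P : Set T) (L : Set T) :
    LocallyMonitorable P L ↔
      ∀ O : Set T, PrimeOpen P O → O ⊆ primeClosure P L ∩ primeClosure P Lᶜ → O = ∅ := by
  rw [forall_primeOpen_subset_eq_empty_iff]
  refine forall₂_congr fun s _ => ?_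
  rw [cone_subset_primeClosure_inter_compl_iff]
  simp only [not_forall, not_not, exists_prop]

end MzTrace
end

section
/- If (Σ, dom) is disconnected, then the family of locally monitorable subsets of ℝ is not closed under union: with a, b in different connected components, the sets L = "no occurrence of a" and K = "no occurrence of b" are both locally monitorable, but L ∪ K is not. -/
namespace MzTrace

/-!
STATEMENT 10: a disconnected alphabet where locally monitorable sets are not
closed under union.  We take the disconnected distributed alphabet
`Σ = {a, b}` with `a` and `b` independent (in different connected
components).  A real trace over this alphabet is determined by its number of
`a`'s and of `b`'s, so `ℝ ≅ ℕ∞ × ℕ∞` with the componentwise (prefix) order;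
the primes are the nonempty finite traces using only one of the letters.
-/

/-- Real traces over two independent letters `a, b`. -/
abbrev TwoTr : Type := ℕ∞ × ℕ∞

/-- The prime traces: a nonzero finite number of `a`'s (and no `b`), or
symmetrically. -/
def twoPrimes : Set TwoTr :=
  {x | (1 ≤ x.1 ∧ x.1 ≠ ⊤ ∧ x.2 = 0) ∨ (1 ≤ x.2 ∧ x.2 ≠ ⊤ ∧ x.1 = 0)}

/-- `L` = "no occurrence of `a`". -/
def noA : Set TwoTr := {x | x.1 = 0}

/-- `K` = "no occurrence of `b`". -/
def noB : Set TwoTr := {x | x.2 = 0}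

section General

variable {T : Type} [PartialOrder T] [OrderTop T] {P L : Set T}

theorem coherent_of_orderTop (C : Set T) : Coherent C := OrderTop.bddAbove C

theorem LocallyMonitorable.of_mem_of_cone {t : T} (ht : t ∈ P)
    (h : cone t ⊆ L ∨ cone t ⊆ Lᶜ) : LocallyMonitorable P L :=
  fun _ _ => ⟨t, ht, coherent_of_orderTop _, h⟩

theorem not_locallyMonitorable_of_subset_of_top_notMem (hP : P.Nonempty) (hPL : P ⊆ L)
    (htop : ⊤ ∉ L) : ¬ LocallyMonitorable P L := by
  obtain ⟨s, hs⟩ := hP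
  intro hmon
  obtain ⟨t, ht, -, hcone | hcone⟩ := hmon s hs
  · exact htop (hcone le_top)
  · exact hcone (le_refl t) (hPL ht)

end General

theorem one_zero_mem_twoPrimes : ((1, 0) : TwoTr) ∈ twoPrimes :=
  Or.inl ⟨le_rfl, ENat.one_ne_top, rfl⟩

theorem zero_one_mem_twoPrimes : ((0, 1) : TwoTr) ∈ twoPrimes :=
  Or.inr ⟨le_rfl, ENat.one_ne_top, rfl⟩

theorem cone_one_zero_subset_compl_noA : cone ((1, 0) : TwoTr) ⊆ noAᶜ := fun x hx hx0 =>
  (zero_lt_one' ℕ∞).not_ge ((hx0 : x.1 = 0) ▸ hx.1)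

theorem cone_zero_one_subset_compl_noB : cone ((0, 1) : TwoTr) ⊆ noBᶜ := fun x hx hx0 =>
  (zero_lt_one' ℕ∞).not_ge ((hx0 : x.2 = 0) ▸ hx.2)

theorem twoPrimes_subset_noA_union_noB : twoPrimes ⊆ noA ∪ noB := by
  rintro x (⟨-, -, hb⟩ | ⟨-, -, ha⟩)
  · exact Or.inr hb
  · exact Or.inl ha

theorem top_notMem_noA_union_noB : (⊤ : TwoTr) ∉ noA ∪ noB := by
  simp [noA, noB]

/-- with `a, b` in different connected components, the sets
"no occurrence of `a`" and "no occurrence of `b`" are both locally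
monitorable, but their union is not; so for a disconnected alphabet the
locally monitorable sets are not closed under union. -/
theorem disconnected_not_closed_under_union :
    LocallyMonitorable twoPrimes noA ∧ LocallyMonitorable twoPrimes noB ∧
    ¬ LocallyMonitorable twoPrimes (noA ∪ noB) :=
  ⟨.of_mem_of_cone one_zero_mem_twoPrimes (Or.inr cone_one_zero_subset_compl_noA),
    .of_mem_of_cone zero_one_mem_twoPrimes (Or.inr cone_zero_one_subset_compl_noB),
    not_locallyMonitorable_of_subset_of_top_notMem ⟨_, one_zero_mem_twoPrimes⟩
      twoPrimes_subset_noA_union_noB top_notMem_noA_union_noB⟩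

end MzTrace
end

section
/- Suppose ℝ = ℝ' × ℝ'' (the alphabet splits into two mutually independent parts) and there is some prime s ∈ 𝒫(ℝ') with sℝ ⊆ L but no prime t ∈ 𝒫(ℝ'') with tℝ ⊆ L. Define L₁ = {u ∈ 𝒫(ℝ') : uℝ ⊆ L} and L₂ = {u ∈ 𝒫(ℝ') : uℝ ⊆ L^c}. Then L is locally monitorable if and only if the family {L₁ℝ', L₂ℝ'} is locally monitorable with respect to ℝ'. -/
namespace MzTrace

/-- A family `F` of subsets is locally monitorable (w.r.t. the primes `P`). -/
def FamilyLocallyMonitorable {T : Type} [PartialOrder T] (P : Set T) (F : Set (Set T)) : Prop :=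
  ∀ s ∈ P, ∃ t ∈ P, ∃ Li ∈ F, Coherent {s, t} ∧ cone t ⊆ Li

variable {T₁ T₂ : Type} [PartialOrder T₁] [PartialOrder T₂] [OrderBot T₁] [OrderBot T₂]

/-!
STATEMENT 12 (Theorem thm:discon).  The alphabet splits into two mutually
independent parts, so `ℝ = ℝ' × ℝ''` with the componentwise prefix order
(`⊥` is the empty trace).  The primes of `ℝ` are the primes of `ℝ'` (paired
with the empty trace of `ℝ''`) together with the primes of `ℝ''`.
-/

/-- The primes of the product `ℝ' × ℝ''`, where `P₁ = 𝒫(ℝ')`, `P₂ = 𝒫(ℝ'')`. -/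
def prodPrimes (P₁ : Set T₁) (P₂ : Set T₂) : Set (T₁ × T₂) :=
  (fun p => (p, (⊥ : T₂))) '' P₁ ∪ (fun q => ((⊥ : T₁), q)) '' P₂

section Coherence

variable {α : Type} [PartialOrder α]

theorem coherent_pair_iff_s12 {a b : α} : Coherent ({a, b} : Set α) ↔ ∃ c, a ≤ c ∧ b ≤ c := by
  simp [Coherent, BddAbove, upperBounds, Set.Nonempty]

theorem coherent_pair_of_le_s12 {a b : α} (h : a ≤ b) : Coherent ({a, b} : Set α) :=
  coherent_pair_iff_s12.2 ⟨b, h, le_rfl⟩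

theorem Coherent.inter_cone_nonempty {a b : α} (h : Coherent ({a, b} : Set α)) :
    (cone a ∩ cone b).Nonempty :=
  coherent_pair_iff_s12.1 h

variable {β : Type} [PartialOrder β]

theorem coherent_pair_prod_iff {a b : α} {c d : β} :
    Coherent ({(a, c), (b, d)} : Set (α × β)) ↔
      Coherent ({a, b} : Set α) ∧ Coherent ({c, d} : Set β) := by
  simp only [coherent_pair_iff_s12, Prod.exists, Prod.mk_le_mk]
  constructor
  · rintro ⟨x, y, ⟨hax, hcy⟩, hbx, hdy⟩
    exact ⟨⟨x, hax, hbx⟩, ⟨y, hcy, hdy⟩⟩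
  · rintro ⟨⟨x, hax, hbx⟩, ⟨y, hcy, hdy⟩⟩
    exact ⟨x, y, ⟨hax, hcy⟩, hbx, hdy⟩

theorem coherent_pair_bot_prod [OrderBot α] [OrderBot β] (a : α) (b : β) :
    Coherent ({(a, ⊥), (⊥, b)} : Set (α × β)) :=
  coherent_pair_prod_iff.2 ⟨coherent_pair_iff_s12.2 ⟨a, le_rfl, bot_le⟩, coherent_pair_of_le_s12 bot_le⟩

end Coherence

section LeftCover

variable {α β : Type} [PartialOrder α] [PartialOrder β] [OrderBot β]

/-- `leftCover P₁ L` and `leftCover P₁ Lᶜ` are the paper's `L₁ℝ'` and `L₂ℝ'`. -/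
def leftCover (P₁ : Set α) (M : Set (α × β)) : Set α :=
  ⋃ u ∈ {u ∈ P₁ | cone (u, (⊥ : β)) ⊆ M}, cone u

theorem cone_subset_leftCover {P₁ : Set α} {M : Set (α × β)} {u : α} (hu : u ∈ P₁)
    (hM : cone (u, (⊥ : β)) ⊆ M) : cone u ⊆ leftCover P₁ M :=
  Set.subset_biUnion_of_mem (u := fun u => cone u) ⟨hu, hM⟩

theorem cone_subset_of_mem_leftCover {P₁ : Set α} {M : Set (α × β)} {t : α}
    (ht : t ∈ leftCover P₁ M) : cone (t, (⊥ : β)) ⊆ M := by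
  obtain ⟨u, ⟨-, huM⟩, hut⟩ := Set.mem_iUnion₂.1 ht
  exact (Set.Ici_subset_Ici.2 (Prod.mk_le_mk.2 ⟨hut, le_rfl⟩)).trans huM

end LeftCover

theorem familyLocallyMonitorable_of_locallyMonitorable {P₁ : Set T₁} {P₂ : Set T₂}
    {L : Set (T₁ × T₂)} (h1 : ∃ s ∈ P₁, cone (s, (⊥ : T₂)) ⊆ L)
    (h2 : ¬ ∃ t ∈ P₂, cone ((⊥ : T₁), t) ⊆ L) (hL : LocallyMonitorable (prodPrimes P₁ P₂) L) :
    FamilyLocallyMonitorable P₁ {leftCover P₁ L, leftCover P₁ Lᶜ} := by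
  intro p hp
  obtain ⟨t, ht, hcoh, hverdict⟩ := hL (p, ⊥) (Or.inl ⟨p, hp, rfl⟩)
  rcases ht with ⟨u, hu, rfl⟩ | ⟨q, hq, rfl⟩
  · have hpu := (coherent_pair_prod_iff.1 hcoh).1
    rcases hverdict with hM | hM
    · exact ⟨u, hu, _, Or.inl rfl, hpu, cone_subset_leftCover hu hM⟩
    · exact ⟨u, hu, _, Or.inr rfl, hpu, cone_subset_leftCover hu hM⟩
  · obtain ⟨s, -, hsL⟩ := h1
    rcases hverdict with hM | hM
    · exact (h2 ⟨q, hq, hM⟩).elim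
    · obtain ⟨x, hxs, hxq⟩ := (coherent_pair_bot_prod s q).inter_cone_nonempty
      exact (hM hxq (hsL hxs)).elim

theorem locallyMonitorable_of_familyLocallyMonitorable {P₁ : Set T₁} {P₂ : Set T₂}
    {L : Set (T₁ × T₂)} (h1 : ∃ s ∈ P₁, cone (s, (⊥ : T₂)) ⊆ L)
    (hF : FamilyLocallyMonitorable P₁ {leftCover P₁ L, leftCover P₁ Lᶜ}) :
    LocallyMonitorable (prodPrimes P₁ P₂) L := by
  rintro _ (⟨p, hp, rfl⟩ | ⟨q, -, rfl⟩)
  · obtain ⟨t, ht, M, hM, hcoh, hcone⟩ := hF p hp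
    refine ⟨(t, ⊥), Or.inl ⟨t, ht, rfl⟩,
      coherent_pair_prod_iff.2 ⟨hcoh, coherent_pair_of_le_s12 le_rfl⟩, ?_⟩
    have htM : t ∈ M := hcone Set.self_mem_Ici
    rcases hM with rfl | rfl
    · exact Or.inl (cone_subset_of_mem_leftCover htM)
    · exact Or.inr (cone_subset_of_mem_leftCover htM)
  · obtain ⟨s, hs, hsL⟩ := h1
    refine ⟨(s, ⊥), Or.inl ⟨s, hs, rfl⟩, ?_, Or.inl hsL⟩
    rw [Set.pair_comm]
    exact coherent_pair_bot_prod s q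

/-- suppose some prime `s ∈ 𝒫(ℝ')` satisfies `sℝ ⊆ L` but no
prime `t ∈ 𝒫(ℝ'')` satisfies `tℝ ⊆ L`.  With
`L₁ = {u ∈ 𝒫(ℝ') : uℝ ⊆ L}` and `L₂ = {u ∈ 𝒫(ℝ') : uℝ ⊆ L^c}`,
the set `L` is locally monitorable iff the family `{L₁ℝ', L₂ℝ'}` is locally
monitorable w.r.t. `ℝ'`. -/
theorem locallyMonitorable_disconnected (P₁ : Set T₁) (P₂ : Set T₂) (L : Set (T₁ × T₂))
    (h1 : ∃ s ∈ P₁, cone (s, (⊥ : T₂)) ⊆ L)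
    (h2 : ¬ ∃ t ∈ P₂, cone ((⊥ : T₁), t) ⊆ L) :
    LocallyMonitorable (prodPrimes P₁ P₂) L ↔
      FamilyLocallyMonitorable P₁
        { ⋃ u ∈ {u ∈ P₁ | cone (u, (⊥ : T₂)) ⊆ L}, cone u,
          ⋃ u ∈ {u ∈ P₁ | cone (u, (⊥ : T₂)) ⊆ Lᶜ}, cone u } :=
  ⟨familyLocallyMonitorable_of_locallyMonitorable h1 h2,
    locallyMonitorable_of_familyLocallyMonitorable h1⟩

end MzTrace
end

section
/- For ω-words: if K ⊆ Σ^∞ is prefix-closed and K ∩ Σ^ω is a safety language (closed in the Cantor topology) and K ∩ Σ* satisfies the forward diamond property with respect to an independence relation I, and K is trace-closed, then the corresponding trace language L (with Lin(L) = K) equals its prime closure, i.e., L is prime-closed. -/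
/-!
`L` is prime-closed as soon as every trace whose prime prefixes all lie in `L` lies in `L`
itself. A finite trace is the join of its finitely many prime prefixes, and the forward diamond
property builds this join inside `L` one prime at a time. An arbitrary trace is the limit of an
increasing chain of finite prefixes, which lie in `L` by the finite case, and safety puts the limit
in `L`.
-/

namespace MzTrace

variable {T : Type} [PartialOrder T]

theorem isLUB_insert_of_isLUB_pair {S : Set T} {a z y : T} (hz : IsLUB S z)
    (hy : IsLUB {a, z} y) : IsLUB (insert a S) y := by
  have hub : upperBounds (insert a S) = upperBounds {a, z} := by
    rw [upperBounds_insert, upperBounds_insert, hz.upperBounds_eq, upperBounds_singleton]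
  rwa [IsLUB, hub]

theorem mem_of_forall_finite_le_mem {FinT L : Set T}
    (happrox : ∀ x : T, ∃ f : ℕ → T, Monotone f ∧ (∀ n, f n ∈ FinT ∧ f n ≤ x) ∧
        IsLUB (Set.range f) x)
    (hsafety : ∀ f : ℕ → T, Monotone f → (∀ n, f n ∈ L) →
        ∀ x : T, IsLUB (Set.range f) x → x ∈ L)
    {x : T} (hx : ∀ y ∈ FinT, y ≤ x → y ∈ L) : x ∈ L := by
  obtain ⟨f, hmono, hf, hlub⟩ := happrox x
  exact hsafety f hmono (fun n => hx (f n) (hf n).1 (hf n).2) x hlub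

theorem primeClosed_of_forall_primes_subset_mem {P L : Set T}
    (hdown : ∀ s t : T, s ≤ t → t ∈ L → s ∈ L)
    (hprimes : ∀ x : T, {p ∈ P | p ≤ x} ⊆ L → x ∈ L) : PrimeClosed P L := by
  refine ⟨P \ L, Set.sdiff_subset, Set.ext fun x => ?_⟩
  simp only [Set.mem_compl_iff, Set.mem_iUnion, Set.mem_sdiff, cone, Set.mem_Ici, exists_prop]
  constructor
  · intro hx
    by_contra! hcon
    exact hx (hprimes x fun p hp => by_contra fun hpL => hcon p ⟨hp.1, hpL⟩ hp.2)
  · rintro ⟨p, ⟨-, hpL⟩, hpx⟩ hxL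
    exact hpL (hdown p x hpx hxL)

theorem primeClosure_eq_of_primeClosed {P L : Set T} (hL : PrimeClosed P L) :
    primeClosure P L = L :=
  subset_antisymm (Set.sInter_subset_of_mem ⟨hL, subset_rfl⟩)
    (Set.subset_sInter fun _ hK => hK.2)

end MzTrace

namespace MzTrace

variable {T : Type} [PartialOrder T] [OrderBot T]

theorem exists_isLUB_mem_of_finite {FinT L : Set T}
    (hFdown : ∀ s t : T, s ≤ t → t ∈ FinT → s ∈ FinT)
    (hsup : ∀ s t x : T, s ≤ x → t ≤ x → ∃ y, IsLUB {s, t} y)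
    (hjoin : ∀ s ∈ L ∩ FinT, ∀ t ∈ L ∩ FinT, ∀ x : T, IsLUB {s, t} x → x ∈ L)
    (hbot : ⊥ ∈ L) {S : Set T} (hS : S.Finite) (hSL : S ⊆ L) {b : T} (hb : b ∈ FinT)
    (hSb : b ∈ upperBounds S) : ∃ z ∈ L, IsLUB S z := by
  induction S, hS using Set.Finite.induction_on with
  | empty => exact ⟨⊥, hbot, isLUB_empty⟩
  | @insert a S _ _ ih =>
    rw [Set.insert_subset_iff] at hSL
    rw [upperBounds_insert] at hSb
    obtain ⟨z, hzL, hz⟩ := ih hSL.2 hSb.2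
    have hzb : z ≤ b := hz.2 hSb.2
    obtain ⟨y, hy⟩ := hsup a z b hSb.1 hzb
    have hyL : y ∈ L :=
      hjoin a ⟨hSL.1, hFdown a b hSb.1 hb⟩ z ⟨hzL, hFdown z b hzb hb⟩ y hy
    exact ⟨y, hyL, isLUB_insert_of_isLUB_pair hz hy⟩

/-- The hypotheses on `L` render those on `K = Lin(L)`: `hdown` is prefix-closedness, `hjoin` the
forward diamond property and `hsafety` the safety of `K ∩ Σ^ω`. `FinT` is the set of finite
traces. -/
theorem primeClosed_of_safety_forwardDiamond_general (P FinT : Set T)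
    (hFdown : ∀ s t : T, s ≤ t → t ∈ FinT → s ∈ FinT)
    (hlubprimes : ∀ x : T, IsLUB {p ∈ P | p ≤ x} x)
    (hfinprimes : ∀ x ∈ FinT, {p ∈ P | p ≤ x}.Finite)
    (hsup : ∀ s t x : T, s ≤ x → t ≤ x → ∃ y, IsLUB {s, t} y)
    (happrox : ∀ x : T, ∃ f : ℕ → T, Monotone f ∧ (∀ n, f n ∈ FinT ∧ f n ≤ x) ∧
        IsLUB (Set.range f) x)
    (L : Set T) (hne : L.Nonempty)
    (hdown : ∀ s t : T, s ≤ t → t ∈ L → s ∈ L)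
    (hjoin : ∀ s ∈ L ∩ FinT, ∀ t ∈ L ∩ FinT, ∀ x : T, IsLUB {s, t} x → x ∈ L)
    (hsafety : ∀ f : ℕ → T, Monotone f → (∀ n, f n ∈ L) →
        ∀ x : T, IsLUB (Set.range f) x → x ∈ L) :
    primeClosure P L = L := by
  obtain ⟨t, ht⟩ := hne
  have hbot : ⊥ ∈ L := hdown ⊥ t bot_le ht
  refine primeClosure_eq_of_primeClosed
    (primeClosed_of_forall_primes_subset_mem hdown fun x hx => ?_)
  refine mem_of_forall_finite_le_mem happrox hsafety fun y hy hyx => ?_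
  obtain ⟨z, hzL, hz⟩ := exists_isLUB_mem_of_finite hFdown hsup hjoin hbot (hfinprimes y hy)
    (fun p hp => hx ⟨hp.1, hp.2.trans hyx⟩) hy (fun _ hp => hp.2)
  exact hz.unique (hlubprimes y) ▸ hzL

/-- part of Propositions p:locsafety / p:folocsafety, direction
(2)/(3) ⇒ (1): if `K = Lin(L) ⊆ Σ^∞` is trace-closed and prefix-closed,
`K ∩ Σ^ω` is a safety language, and `K ∩ Σ*` satisfies the forward diamond
property, then the trace language `L` is prime-closed, i.e. `L = L̄`.

The word-level hypotheses on `K` are rendered on the (trace-closed) trace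
language `L ⊆ ℝ`:
* `hdown`: prefix-closedness of `K`,
* `hjoin`: the forward diamond property — if two finite traces of `L` are
  coherent then their join is again in `L`,
* `hsafety`: `K ∩ Σ^ω` is a safety (topologically closed) language — limits
  of increasing chains in `L` stay in `L`.

`FinT` is the set of finite traces; the remaining hypotheses are the basic
domain properties of real traces: primes are finite, finiteness is inherited
by prefixes, a finite trace has finitely many prime prefixes and is their
least upper bound, bounded pairs have joins, and every trace is the limit of
an increasing chain of its finite prefixes. -/
theorem primeClosed_of_safety_forwardDiamond (P FinT : Set T)
    (hPF : P ⊆ FinT)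
    (hFdown : ∀ s t : T, s ≤ t → t ∈ FinT → s ∈ FinT)
    (hlubprimes : ∀ x : T, IsLUB {p ∈ P | p ≤ x} x)
    (hfinprimes : ∀ x ∈ FinT, {p ∈ P | p ≤ x}.Finite)
    (hsup : ∀ s t x : T, s ≤ x → t ≤ x → ∃ y, IsLUB {s, t} y)
    (happrox : ∀ x : T, ∃ f : ℕ → T, Monotone f ∧ (∀ n, f n ∈ FinT ∧ f n ≤ x) ∧
        IsLUB (Set.range f) x)
    (L : Set T) (hne : L.Nonempty)
    (hdown : ∀ s t : T, s ≤ t → t ∈ L → s ∈ L)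
    (hjoin : ∀ s ∈ L ∩ FinT, ∀ t ∈ L ∩ FinT, ∀ x : T, IsLUB {s, t} x → x ∈ L)
    (hsafety : ∀ f : ℕ → T, Monotone f → (∀ n, f n ∈ L) →
        ∀ x : T, IsLUB (Set.range f) x → x ∈ L) :
    primeClosure P L = L :=
  primeClosed_of_safety_forwardDiamond_general P FinT hFdown hlubprimes hfinprimes hsup happrox L
    hne hdown hjoin hsafety

end MzTrace
end

section
/- A prime trace extension lemma: if (Σ, dom) is connected and {s, t} is a coherent set of finite traces, then there exists a prime trace p with s ≤ p and t ≤ p. -/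
/-- The independence relation induced by a location function. -/
def indep {Sigma Proc : Type} (dom : Sigma → Set Proc) (a b : Sigma) : Prop :=
  dom a ∩ dom b = ∅

/-- One swap of two adjacent independent letters. -/
def SwapStep {Sigma : Type} (I : Sigma → Sigma → Prop) (w w' : List Sigma) : Prop :=
  ∃ u v a b, I a b ∧ w = u ++ a :: b :: v ∧ w' = u ++ b :: a :: v

/-- Mazurkiewicz trace equivalence `∼_I` on finite words. -/
def TraceEq {Sigma : Type} (I : Sigma → Sigma → Prop) : List Sigma → List Sigma → Prop :=
  Relation.EqvGen (SwapStep I)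

/-- `s` is a trace prefix of `u`: some extension of `s` is `∼_I`-equivalent
to `u` (i.e. `[s] ≤ [u]` as traces). -/
def TrPrefix {Sigma : Type} (I : Sigma → Sigma → Prop) (s u : List Sigma) : Prop :=
  ∃ v, TraceEq I (s ++ v) u

/-- The (finite) trace of `p` is prime: it is nonempty and has a unique
maximal element, i.e. all its linearizations end with the same letter
occurrence. -/
def IsPrime {Sigma : Type} (I : Sigma → Sigma → Prop) (p : List Sigma) : Prop :=
  p ≠ [] ∧ ∀ v b w c, TraceEq I (v ++ [b]) p → TraceEq I (w ++ [c]) p →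
    b = c ∧ TraceEq I v w

/-- The distributed alphabet `(Σ, dom)` is connected: `Σ` cannot be split
into two nonempty mutually independent parts (and `Σ` is nonempty). -/
def Connected {Sigma Proc : Type} (dom : Sigma → Set Proc) : Prop :=
  Nonempty Sigma ∧
    ¬ ∃ S₁ S₂ : Set Sigma, S₁.Nonempty ∧ S₂.Nonempty ∧ S₁ ∪ S₂ = Set.univ ∧
        Disjoint S₁ S₂ ∧ ∀ a ∈ S₁, ∀ b ∈ S₂, indep dom a b

/-
Extend a common upper bound `u` of `s` and `t` by a word `l` that walks through the dependence
graph `¬ indep` (connected, since the alphabet is) and visits every letter of `u`. In `u ++ l`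
every letter but the last has a later letter depending on it, and this property is invariant
under swaps of adjacent independent letters. Hence in every linearization of `[u ++ l]` the last
letter is the same maximal event, and removing it leaves equivalent words: `[u ++ l]` is prime.
-/

section Traces

variable {Sigma : Type} {I : Sigma → Sigma → Prop}

theorem TraceEq.append_right {q q' : List Sigma} (r : List Sigma) (h : TraceEq I q q') :
    TraceEq I (q ++ r) (q' ++ r) := by
  induction h with
  | rel x y hxy =>
    obtain ⟨u, v, a, b, hab, rfl, rfl⟩ := hxy
    exact .rel _ _ ⟨u, v ++ r, a, b, hab, by simp, by simp⟩
  | refl x => exact .refl _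
  | symm x y _ ih => exact .symm _ _ ih
  | trans x y z _ _ ih₁ ih₂ => exact .trans _ _ _ ih₁ ih₂

theorem TrPrefix.append_right {s u : List Sigma} (l : List Sigma) (h : TrPrefix I s u) :
    TrPrefix I s (u ++ l) := by
  obtain ⟨v, hv⟩ := h
  exact ⟨v ++ l, by simpa using hv.append_right l⟩

/-- Every letter but the last has a later letter depending on it, so that the last letter is the
unique maximal event of the trace. -/
def LastIsUniqueMax (I : Sigma → Sigma → Prop) : List Sigma → Prop
  | [] => True
  | a :: y => (y ≠ [] → ∃ b ∈ y, ¬ I a b) ∧ LastIsUniqueMax I y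

theorem lastIsUniqueMax_cons {a : Sigma} {y : List Sigma} :
    LastIsUniqueMax I (a :: y) ↔ (y ≠ [] → ∃ b ∈ y, ¬ I a b) ∧ LastIsUniqueMax I y :=
  Iff.rfl

theorem LastIsUniqueMax.of_append {u v : List Sigma} (h : LastIsUniqueMax I (u ++ v)) :
    LastIsUniqueMax I v := by
  induction u with
  | nil => exact h
  | cons _ _ ih => exact ih h.2

theorem lastIsUniqueMax_pair {a b : Sigma} : LastIsUniqueMax I [a, b] ↔ ¬ I a b := by
  simp [LastIsUniqueMax]

theorem lastIsUniqueMax_of_isChain {l : List Sigma} (hl : l.IsChain (fun a b => ¬ I a b)) :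
    LastIsUniqueMax I l := by
  induction l with
  | nil => trivial
  | cons a y ih =>
    refine ⟨fun hy => ?_, ih hl.tail⟩
    obtain ⟨b, y, rfl⟩ := List.exists_cons_of_ne_nil hy
    exact ⟨b, List.mem_cons_self, (List.isChain_cons_cons.mp hl).1⟩

theorem LastIsUniqueMax.append {u l : List Sigma} (hu : ∀ c ∈ u, ∃ d ∈ l, ¬ I c d)
    (hl : LastIsUniqueMax I l) : LastIsUniqueMax I (u ++ l) := by
  induction u with
  | nil => exact hl
  | cons c u ih =>
    obtain ⟨d, hd, hcd⟩ := hu c List.mem_cons_self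
    exact ⟨fun _ => ⟨d, List.mem_append_right _ hd, hcd⟩,
      ih fun c hc => hu c (List.mem_cons_of_mem _ hc)⟩

theorem LastIsUniqueMax.swap {u v : List Sigma} {a b : Sigma} (hab : I a b)
    (h : LastIsUniqueMax I (u ++ a :: b :: v)) : LastIsUniqueMax I (u ++ b :: a :: v) := by
  induction u with
  | nil =>
    obtain ⟨ha, hb, hv⟩ := h
    obtain ⟨d, hd, had⟩ := ha (List.cons_ne_nil _ _)
    have hdv : d ∈ v := by
      rcases List.mem_cons.mp hd with rfl | hdv
      · exact absurd hab had
      · exact hdv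
    refine ⟨fun _ => ?_, fun _ => ⟨d, hdv, had⟩, hv⟩
    obtain ⟨e, he, hbe⟩ := hb (List.ne_nil_of_mem hdv)
    exact ⟨e, List.mem_cons_of_mem _ he, hbe⟩
  | cons c u ih =>
    rw [List.cons_append, lastIsUniqueMax_cons] at h ⊢
    obtain ⟨hc, hu⟩ := h
    refine ⟨fun _ => ?_, ih hu⟩
    obtain ⟨d, hd, hcd⟩ := hc (by simp)
    exact ⟨d, by simp only [List.mem_append, List.mem_cons] at hd ⊢; tauto, hcd⟩

theorem SwapStep.getLast?_eq_and_dropLast {q q' : List Sigma} (h : SwapStep I q q')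
    (hq : LastIsUniqueMax I q) : q.getLast? = q'.getLast? ∧ SwapStep I q.dropLast q'.dropLast := by
  obtain ⟨u, v, a, b, hab, rfl, rfl⟩ := h
  rcases List.eq_nil_or_concat v with rfl | ⟨v, e, rfl⟩
  · exact absurd hab (lastIsUniqueMax_pair.mp hq.of_append)
  · have hsplit : ∀ x y : Sigma, u ++ x :: y :: v.concat e = (u ++ x :: y :: v) ++ [e] := by
      simp
    refine ⟨by simp only [hsplit, List.getLast?_concat], u, v, a, b, hab, ?_, ?_⟩ <;>
      simp only [hsplit, List.dropLast_concat]

variable [Std.Symm I]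

theorem TraceEq.lastIsUniqueMax_iff {q q' : List Sigma} (h : TraceEq I q q') :
    LastIsUniqueMax I q ↔ LastIsUniqueMax I q' := by
  induction h with
  | rel x y hxy =>
    obtain ⟨u, v, a, b, hab, rfl, rfl⟩ := hxy
    exact ⟨LastIsUniqueMax.swap hab, LastIsUniqueMax.swap (symm_of I hab)⟩
  | refl x => exact Iff.rfl
  | symm x y _ ih => exact ih.symm
  | trans x y z _ _ ih₁ ih₂ => exact ih₁.trans ih₂

theorem TraceEq.getLast?_eq_and_dropLast {q q' : List Sigma} (h : TraceEq I q q') :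
    LastIsUniqueMax I q → q.getLast? = q'.getLast? ∧ TraceEq I q.dropLast q'.dropLast := by
  induction h with
  | rel x y hxy =>
    intro hx
    obtain ⟨hlast, hdrop⟩ := hxy.getLast?_eq_and_dropLast hx
    exact ⟨hlast, .rel _ _ hdrop⟩
  | refl x => exact fun _ => ⟨rfl, .refl _⟩
  | symm x y hxy ih =>
    intro hy
    obtain ⟨hlast, hdrop⟩ := ih ((TraceEq.lastIsUniqueMax_iff hxy).mpr hy)
    exact ⟨hlast.symm, .symm _ _ hdrop⟩
  | trans x y z hxy _ ih₁ ih₂ =>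
    intro hx
    obtain ⟨hlast₁, hdrop₁⟩ := ih₁ hx
    obtain ⟨hlast₂, hdrop₂⟩ := ih₂ ((TraceEq.lastIsUniqueMax_iff hxy).mp hx)
    exact ⟨hlast₁.trans hlast₂, .trans _ _ _ hdrop₁ hdrop₂⟩

theorem isPrime_of_lastIsUniqueMax {q : List Sigma} (hne : q ≠ []) (hq : LastIsUniqueMax I q) :
    IsPrime I q := by
  refine ⟨hne, fun v b w c hv hw => ?_⟩
  have hvw : TraceEq I (v ++ [b]) (w ++ [c]) := .trans _ _ _ hv (.symm _ _ hw)
  simpa using hvw.getLast?_eq_and_dropLast (hv.lastIsUniqueMax_iff.mpr hq)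

end Traces

theorem List.exists_isChain_cons_superset {α : Type} {r : α → α → Prop}
    (hr : ∀ a b, Relation.ReflTransGen r a b) (a : α) (xs : List α) :
    ∃ l, (a :: l).IsChain r ∧ xs ⊆ a :: l := by
  induction xs generalizing a with
  | nil => exact ⟨[], .singleton a, List.nil_subset _⟩
  | cons x xs ih =>
    obtain ⟨m, hm, hmx⟩ := List.exists_isChain_cons_of_relationReflTransGen (hr a x)
    obtain ⟨l, hl, hxs⟩ := ih x
    have hx : x ∈ a :: m := hmx ▸ List.getLast_mem _
    refine ⟨m ++ l, ?_, List.cons_subset.mpr ⟨?_, fun y hy => ?_⟩⟩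
    · refine List.IsChain.append (l₁ := a :: m) hm hl.tail fun y hy z hz => ?_
      rw [List.getLast?_eq_some_getLast (List.cons_ne_nil a m), hmx, Option.mem_some_iff] at hy
      exact hy ▸ hl.rel_head? hz
    · exact List.mem_append_left l hx
    · rcases List.mem_cons.mp (hxs hy) with rfl | hy
      · exact List.mem_append_left l hx
      · exact List.mem_cons_of_mem a (List.mem_append_right m hy)

section Alphabet

variable {Sigma Proc : Type} {dom : Sigma → Set Proc}

instance : Std.Symm (indep dom) where
  symm a b h := by rwa [indep, Set.inter_comm]

theorem not_indep_self (hdom : ∀ a, (dom a).Nonempty) (a : Sigma) : ¬ indep dom a a := by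
  simpa [indep] using (hdom a).ne_empty

theorem Connected.reflTransGen_not_indep (hconn : Connected dom) (a b : Sigma) :
    Relation.ReflTransGen (fun x y => ¬ indep dom x y) a b := by
  by_contra hab
  refine hconn.2 ⟨{x | Relation.ReflTransGen _ a x}, {x | Relation.ReflTransGen _ a x}ᶜ,
    ⟨a, .refl⟩, ⟨b, hab⟩, Set.union_compl_self _, disjoint_compl_right, fun x hx y hy => ?_⟩
  by_contra hxy
  exact hy (hx.tail hxy)

end Alphabet

/-- if `(Σ, dom)` is connected and `{s, t}` is a coherent set
of finite traces (they have a common upper bound `u`), then there is a prime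
trace `p` with `s ≤ p` and `t ≤ p`. -/
theorem coherent_pair_extends_to_prime {Sigma Proc : Type}
    (dom : Sigma → Set Proc) (hdom : ∀ a, (dom a).Nonempty)
    (hconn : Connected dom) (s t : List Sigma)
    (hcoh : ∃ u : List Sigma, TrPrefix (indep dom) s u ∧ TrPrefix (indep dom) t u) :
    ∃ p : List Sigma, IsPrime (indep dom) p ∧
      TrPrefix (indep dom) s p ∧ TrPrefix (indep dom) t p := by
  obtain ⟨u, hs, ht⟩ := hcoh
  obtain ⟨a⟩ := hconn.1
  obtain ⟨l, hl, hul⟩ := List.exists_isChain_cons_superset hconn.reflTransGen_not_indep a u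
  have hmax : LastIsUniqueMax (indep dom) (u ++ a :: l) :=
    (lastIsUniqueMax_of_isChain hl).append fun c hc => ⟨c, hul hc, not_indep_self hdom c⟩
  exact ⟨u ++ a :: l, isPrime_of_lastIsUniqueMax (by simp) hmax,
    hs.append_right _, ht.append_right _⟩
end
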